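/- arXiv:2109.07023 — 2 statements merged into one kernel-verified Lean document; each statement's English description precedes it below -/
import Mathlib

section
/- If two indices i₀ ≠ j₀ satisfy D_{i₀,k} = D_{j₀,k} for all k ∉ {i₀,j₀} and D_{i₀,j₀} = 0, then any global minimizer X of the stress function stress(X) = ∑_{i<j}(‖X_i − X_j‖ − D_{ij})² satisfies X_{i₀} = X_{j₀}. -/
/-! Since `a` and `b` are structurally equivalent, moving `b` onto `a` (the configuration
`X ∘ update id b a`) does not change any target distance, and neither does moving `a` onto `b`.
Together the two moved configurations count every pair term of `X` twice, except the pair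
`{a, b}`, which they no longer pay for: their stresses add up to `2 stress X - 2 ‖X a - X b‖²`.
Minimality of `X` therefore forces `X a = X b`. -/

open Finset

/-- The stress function for configurations `X : Fin n → ℝ^d`. -/
noncomputable def stress {n d : ℕ} (D : Matrix (Fin n) (Fin n) ℝ)
    (X : Fin n → EuclideanSpace ℝ (Fin d)) : ℝ :=
  ∑ i : Fin n, ∑ j : Fin n, if i < j then (‖X i - X j‖ - D i j) ^ 2 else 0

section
variable {ι M : Type*} [Fintype ι] [AddCommGroup M]

theorem sum_sum_eq_two_nsmul_sum_sum_ite_lt [LinearOrder ι] (g : ι → ι → M)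
    (hsymm : ∀ i j, g j i = g i j) (hdiag : ∀ i, g i i = 0) :
    ∑ i, ∑ j, g i j = 2 • ∑ i, ∑ j, if i < j then g i j else 0 := by
  have hsplit : ∀ i j, g i j = (if i < j then g i j else 0) + if j < i then g j i else 0 := by
    intro i j
    rcases lt_trichotomy i j with h | rfl | h
    · simp [h, h.not_gt]
    · simp [hdiag]
    · simp [h, h.not_gt, hsymm]
  calc ∑ i, ∑ j, g i j
      = ∑ i, ∑ j, ((if i < j then g i j else 0) + if j < i then g j i else 0) :=
        sum_congr rfl fun i _ => sum_congr rfl fun j _ => hsplit i j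
    _ = 2 • ∑ i, ∑ j, if i < j then g i j else 0 := by
        simp only [sum_add_distrib, two_nsmul]
        rw [sum_comm (f := fun i j => if j < i then g j i else 0)]

variable [DecidableEq ι]

theorem sum_comp_update_id (φ : ι → M) (a b : ι) :
    ∑ i, φ (Function.update id b a i) = ∑ i, φ i - φ b + φ a := by
  rw [← Function.comp_def φ, Function.comp_update, sum_update_of_mem (mem_univ b),
    ← sum_erase_eq_sub (mem_univ b), ← sdiff_singleton_eq_erase, add_comm]
  rfl

theorem sum_sum_comp_update_id (h : ι → ι → M) (a b : ι) :
    ∑ i, ∑ j, h (Function.update id b a i) (Function.update id b a j) =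
      ∑ i, ∑ j, h i j - ∑ i, h i b + ∑ i, h i a - ∑ j, h b j + ∑ j, h a j
        + h b b - h b a - h a b + h a a := by
  simp_rw [sum_comp_update_id (h _)]
  rw [sum_comp_update_id (fun x => ∑ j, h x j - h x b + h x a)]
  simp only [sum_add_distrib, sum_sub_distrib]
  abel

theorem sum_sum_comp_update_id_add (h : ι → ι → M) (a b : ι) :
    (∑ i, ∑ j, h (Function.update id b a i) (Function.update id b a j)) +
        (∑ i, ∑ j, h (Function.update id a b i) (Function.update id a b j)) +
        2 • (h a b + h b a) =
      2 • (∑ i, ∑ j, h i j) + 2 • (h a a + h b b) := by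
  rw [sum_sum_comp_update_id, sum_sum_comp_update_id]
  abel

end

theorem Matrix.IsSymm.apply_update_id_update_id {ι : Type*} [DecidableEq ι] {D : Matrix ι ι ℝ}
    (hDsymm : D.IsSymm) (hDdiag : ∀ i, D i i = 0) {a b : ι}
    (hEq : ∀ k, k ≠ a → k ≠ b → D a k = D b k) (hZero : D a b = 0) (i j : ι) :
    D (Function.update id b a i) (Function.update id b a j) = D i j := by
  have hrow : ∀ k, D a k = D b k := by
    intro k
    by_cases hka : k = a
    · rw [hka, hDdiag, hDsymm.apply a b, hZero]
    by_cases hkb : k = b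
    · rw [hkb, hZero, hDdiag]
    exact hEq k hka hkb
  have hcol : ∀ k, D k a = D k b := fun k => by
    rw [hDsymm.apply a k, hDsymm.apply b k, hrow]
  by_cases hi : i = b <;> by_cases hj : j = b <;>
    simp [hi, hj, Function.update_of_ne, hrow, hcol]

section
variable {n d : ℕ} {D : Matrix (Fin n) (Fin n) ℝ}

theorem two_mul_stress (hDsymm : D.IsSymm) (hDdiag : ∀ i, D i i = 0)
    (X : Fin n → EuclideanSpace ℝ (Fin d)) :
    2 * stress D X = ∑ i, ∑ j, (‖X i - X j‖ - D i j) ^ 2 := by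
  rw [sum_sum_eq_two_nsmul_sum_sum_ite_lt _ (fun i j => by rw [norm_sub_rev, hDsymm.apply])
    (fun i => by simp [hDdiag]), nsmul_eq_mul, Nat.cast_ofNat, stress]

theorem stress_comp_update_id_add (hDsymm : D.IsSymm) (hDdiag : ∀ i, D i i = 0) {a b : Fin n}
    (hEq : ∀ k, k ≠ a → k ≠ b → D a k = D b k) (hZero : D a b = 0)
    (X : Fin n → EuclideanSpace ℝ (Fin d)) :
    stress D (X ∘ Function.update id b a) + stress D (X ∘ Function.update id a b)
      + 2 * ‖X a - X b‖ ^ 2 = 2 * stress D X := by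
  have hZero' : D b a = 0 := hDsymm.apply a b ▸ hZero
  have h := sum_sum_comp_update_id_add (fun i j => (‖X i - X j‖ - D i j) ^ 2) a b
  simp only [hDsymm.apply_update_id_update_id hDdiag hEq hZero,
    hDsymm.apply_update_id_update_id hDdiag (fun k hb ha => (hEq k ha hb).symm) hZero',
    hZero, hZero', hDdiag, sub_self, norm_zero, norm_sub_rev (X b), sub_zero, nsmul_eq_mul,
    Nat.cast_ofNat] at h
  have hY := two_mul_stress hDsymm hDdiag (X ∘ Function.update id b a)
  have hZ := two_mul_stress hDsymm hDdiag (X ∘ Function.update id a b)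
  simp only [Function.comp_apply] at hY hZ
  linarith [two_mul_stress hDsymm hDdiag X]
end

theorem minimizer_same_position_general (n d : ℕ) (D : Matrix (Fin n) (Fin n) ℝ)
    (hDsymm : D.IsSymm) (hDdiag : ∀ i, D i i = 0)
    (i₀ j₀ : Fin n)
    (hEq : ∀ k, k ≠ i₀ → k ≠ j₀ → D i₀ k = D j₀ k)
    (hZero : D i₀ j₀ = 0)
    (X : Fin n → EuclideanSpace ℝ (Fin d))
    (hmin : ∀ X' : Fin n → EuclideanSpace ℝ (Fin d), stress D X ≤ stress D X') :
    X i₀ = X j₀ := by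
  have hsum := stress_comp_update_id_add hDsymm hDdiag hEq hZero X
  have h₁ := hmin (X ∘ Function.update id j₀ i₀)
  have h₂ := hmin (X ∘ Function.update id i₀ j₀)
  have hnorm : ‖X i₀ - X j₀‖ ^ 2 = 0 := by nlinarith [sq_nonneg ‖X i₀ - X j₀‖]
  rwa [sq_eq_zero_iff, norm_sub_eq_zero_iff] at hnorm

/-- structurally equivalent nodes are embedded at the same position by any
global minimizer of the stress function. -/
theorem minimizer_same_position (n d : ℕ) (D : Matrix (Fin n) (Fin n) ℝ)
    (hDsymm : D.IsSymm) (hDnonneg : ∀ i j, 0 ≤ D i j) (hDdiag : ∀ i, D i i = 0)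
    (i₀ j₀ : Fin n) (hne : i₀ ≠ j₀)
    (hEq : ∀ k, k ≠ i₀ → k ≠ j₀ → D i₀ k = D j₀ k)
    (hZero : D i₀ j₀ = 0)
    (X : Fin n → EuclideanSpace ℝ (Fin d))
    (hmin : ∀ X' : Fin n → EuclideanSpace ℝ (Fin d), stress D X ≤ stress D X') :
    X i₀ = X j₀ :=
  minimizer_same_position_general n d D hDsymm hDdiag i₀ j₀ hEq hZero X hmin
end

section
/- Given a minimizer X of the stress function and indices i₀ < j₀ with D_{i₀,j₀} = 0 and D_{i₀,k} = D_{j₀,k} for all other k: if X_{i₀} ≠ X_{j₀}, then replacing row X_{j₀} by X_{i₀} (choosing i₀ so that its sum of squared residuals to the other points is no larger than that of j₀) yields a matrix X̃ with stress(X̃) < stress(X). -/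
/-!
Split the stress into the pairs avoiding `j₀`, which the merge leaves unchanged, and the row
of residuals of `j₀`. In that row the term against `i₀` drops from `‖X i₀ - X j₀‖² > 0` to `0`
(as `D i₀ j₀ = 0`), and since `D` has the same row at `i₀` and `j₀`, the remaining terms become
the residuals of `i₀`, whose sum is at most that of `j₀`.
-/

open Finset

theorem sum_sum_ite_lt_split {α M : Type*} [Fintype α] [LinearOrder α] [AddCommMonoid M]
    (f : α → α → M) (hf : ∀ i j, f i j = f j i) (m : α) :
    ∑ i, ∑ j, (if i < j then f i j else 0) =
      (∑ i, ∑ j, if i < j ∧ i ≠ m ∧ j ≠ m then f i j else 0) +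
        ∑ k, if k ≠ m then f m k else 0 := by
  calc ∑ i, ∑ j, (if i < j then f i j else 0)
      = ∑ i, ∑ j, ((if i < j ∧ i ≠ m ∧ j ≠ m then f i j else 0) +
          ((if j = m then (if i < m then f i m else 0) else 0) +
            (if i = m then (if m < j then f m j else 0) else 0))) := by
        refine sum_congr rfl fun i _ => sum_congr rfl fun j _ => ?_
        split_ifs <;> grind
    _ = (∑ i, ∑ j, if i < j ∧ i ≠ m ∧ j ≠ m then f i j else 0) +
          ∑ k, ((if k < m then f k m else 0) + (if m < k then f m k else 0)) := by
        simp [sum_add_distrib]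
    _ = _ := by
        congr 1
        refine sum_congr rfl fun k _ => ?_
        rcases lt_trichotomy k m with h | rfl | h
        · simp [h, h.ne, not_lt_of_gt h, hf k m]
        · simp
        · simp [h, h.ne', not_lt_of_gt h]

theorem Fintype.sum_ite_ne_eq_add {α M : Type*} [Fintype α] [DecidableEq α] [AddCommMonoid M]
    (g : α → M) {a m : α} (ham : a ≠ m) :
    (∑ k, if k ≠ m then g k else 0) = g a + ∑ k, if k ≠ a ∧ k ≠ m then g k else 0 := by
  rw [← add_sum_erase _ _ (mem_univ a), if_pos ham, ← add_sum_erase _ _ (mem_univ a),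
    if_neg (fun h => h.1 rfl), zero_add]
  refine congrArg _ (Finset.sum_congr rfl fun k hk => ?_)
  simp [ne_of_mem_erase hk]

noncomputable def stressExcept {n d : ℕ} (D : Matrix (Fin n) (Fin n) ℝ)
    (X : Fin n → EuclideanSpace ℝ (Fin d)) (m : Fin n) : ℝ :=
  ∑ i, ∑ j, if i < j ∧ i ≠ m ∧ j ≠ m then (‖X i - X j‖ - D i j) ^ 2 else 0

section Stress

variable {n d : ℕ} {D : Matrix (Fin n) (Fin n) ℝ}

theorem stress_eq_stressExcept_add (hD : D.IsSymm) (X : Fin n → EuclideanSpace ℝ (Fin d))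
    (m : Fin n) :
    stress D X = stressExcept D X m + ∑ k, if k ≠ m then (‖X m - X k‖ - D m k) ^ 2 else 0 :=
  sum_sum_ite_lt_split _ (fun i j => by rw [norm_sub_rev, hD.apply]) m

theorem stressExcept_update_self (X : Fin n → EuclideanSpace ℝ (Fin d)) (m : Fin n)
    (v : EuclideanSpace ℝ (Fin d)) :
    stressExcept D (Function.update X m v) m = stressExcept D X m :=
  sum_congr rfl fun i _ => sum_congr rfl fun j _ => by
    split_ifs with h
    · rw [Function.update_of_ne h.2.1, Function.update_of_ne h.2.2]
    · rfl

end Stress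

theorem merge_rows_decreases_stress_general (n d : ℕ) (D : Matrix (Fin n) (Fin n) ℝ)
    (hDsymm : D.IsSymm)
    (i₀ j₀ : Fin n) (hij : i₀ < j₀)
    (hZero : D i₀ j₀ = 0)
    (hEq : ∀ k, k ≠ i₀ → k ≠ j₀ → D i₀ k = D j₀ k)
    (X : Fin n → EuclideanSpace ℝ (Fin d))
    (hne : X i₀ ≠ X j₀)
    (hwlog : (∑ k : Fin n, if k ≠ i₀ ∧ k ≠ j₀ then (‖X i₀ - X k‖ - D i₀ k) ^ 2 else 0)
        ≤ ∑ k : Fin n, if k ≠ i₀ ∧ k ≠ j₀ then (‖X j₀ - X k‖ - D j₀ k) ^ 2 else 0) :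
    stress D (Function.update X j₀ (X i₀)) < stress D X := by
  set Y := Function.update X j₀ (X i₀)
  have hY : ∀ k ≠ j₀, Y k = X k := fun k hk => Function.update_of_ne hk _ _
  rw [stress_eq_stressExcept_add hDsymm X j₀, stress_eq_stressExcept_add hDsymm Y j₀,
    stressExcept_update_self, Fintype.sum_ite_ne_eq_add _ hij.ne,
    Fintype.sum_ite_ne_eq_add _ hij.ne]
  have h_merged : (‖Y j₀ - Y i₀‖ - D j₀ i₀) ^ 2 = 0 := by
    simp [Y, hY i₀ hij.ne, hDsymm.apply i₀ j₀, hZero]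
  have h_split : 0 < (‖X j₀ - X i₀‖ - D j₀ i₀) ^ 2 := by
    rw [hDsymm.apply i₀ j₀, hZero, sub_zero]
    exact pow_pos (norm_pos_iff.mpr (sub_ne_zero.mpr hne.symm)) 2
  have h_row : (∑ k, if k ≠ i₀ ∧ k ≠ j₀ then (‖Y j₀ - Y k‖ - D j₀ k) ^ 2 else 0) =
      ∑ k, if k ≠ i₀ ∧ k ≠ j₀ then (‖X i₀ - X k‖ - D i₀ k) ^ 2 else 0 :=
    sum_congr rfl fun k _ => by
      split_ifs with h
      · simp [Y, hY k h.2, hEq k h.1 h.2]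
      · rfl
  rw [h_merged, h_row]
  linarith

/-- if `X i₀ ≠ X j₀` and (WLOG) `i₀`'s residual sum is no larger than
`j₀`'s, then replacing row `j₀` by row `i₀` strictly decreases the stress. -/
theorem merge_rows_decreases_stress (n d : ℕ) (D : Matrix (Fin n) (Fin n) ℝ)
    (hDsymm : D.IsSymm) (hDnonneg : ∀ i j, 0 ≤ D i j) (hDdiag : ∀ i, D i i = 0)
    (i₀ j₀ : Fin n) (hij : i₀ < j₀)
    (hZero : D i₀ j₀ = 0)
    (hEq : ∀ k, k ≠ i₀ → k ≠ j₀ → D i₀ k = D j₀ k)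
    (X : Fin n → EuclideanSpace ℝ (Fin d))
    (hne : X i₀ ≠ X j₀)
    (hwlog : (∑ k : Fin n, if k ≠ i₀ ∧ k ≠ j₀ then (‖X i₀ - X k‖ - D i₀ k) ^ 2 else 0)
        ≤ ∑ k : Fin n, if k ≠ i₀ ∧ k ≠ j₀ then (‖X j₀ - X k‖ - D j₀ k) ^ 2 else 0) :
    stress D (Function.update X j₀ (X i₀)) < stress D X :=
  merge_rows_decreases_stress_general n d D hDsymm i₀ j₀ hij hZero hEq X hne hwlog
end
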